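/- The deformed vector fields X_{z,1} = −x·∂_y, X_{z,2} = (cosh(zx²) − shc(zx²)/2)·y·∂_y − (1/2)shc(zx²)·x·∂_x, and X_{z,3} = shc(zx²)·y·∂_x + [(c/x³)·cosh(zx²)/shc(zx²)² + (shc(zx²) − cosh(zx²))·y²/x]·∂_y satisfy [X_{z,1},X_{z,2}] = cosh(zx²)·X_{z,1}, [X_{z,1},X_{z,3}] = 2X_{z,2}, and [X_{z,2},X_{z,3}] = cosh(zx²)·X_{z,3} + z²(c + x²y²·shc(zx²)²)·X_{z,1} on ℝ²_{x≠0}. -/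

import Mathlib

/-!
All coefficients are built from `C = cosh (z x²)` and `s = shc (z x²)`, whose `x`-derivatives are
`2 z² x³ s` and `2 (C - s) / x`: both follow from `sinh u = u · shc u`. Once these are substituted,
each bracket relation is an identity of rational functions in `x, y, z, c, C, s`; no relation
between `C` and `s` is needed.
-/

noncomputable def shc (x : ℝ) : ℝ := if x = 0 then 1 else Real.sinh x / x

noncomputable def pdx (f : ℝ → ℝ → ℝ) (x y : ℝ) : ℝ := deriv (fun x' => f x' y) x

noncomputable def pdy (f : ℝ → ℝ → ℝ) (x y : ℝ) : ℝ := deriv (fun y' => f x y') y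

/-- Lie bracket of planar vector fields X = (f,g), Y = (p,q). -/
noncomputable def lieBracket (f g p q : ℝ → ℝ → ℝ) (x y : ℝ) : ℝ × ℝ :=
  (f x y * pdx p x y + g x y * pdy p x y - (p x y * pdx f x y + q x y * pdy f x y),
   f x y * pdx q x y + g x y * pdy q x y - (p x y * pdx g x y + q x y * pdy g x y))

open Real Topology

lemma mul_shc (u : ℝ) : u * shc u = sinh u := by
  unfold shc
  split_ifs with h
  · simp [h]
  · field_simp

lemma shc_pos (u : ℝ) : 0 < shc u := by
  unfold shc
  split_ifs with h
  · exact one_pos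
  · rcases lt_or_gt_of_ne h with hneg | hpos
    · exact div_pos_of_neg_of_neg (sinh_neg_iff.2 hneg) hneg
    · exact div_pos (sinh_pos_iff.2 hpos) hpos

lemma hasDerivAt_shc {u : ℝ} (hu : u ≠ 0) : HasDerivAt shc ((cosh u - shc u) / u) u := by
  have hquot : shc =ᶠ[𝓝 u] fun v => sinh v / v := by
    filter_upwards [isOpen_ne.mem_nhds hu] with v hv
    simp [shc, hv]
  refine ((hasDerivAt_sinh u).div (hasDerivAt_id' u) hu).congr_of_eventuallyEq hquot
    |>.congr_deriv ?_
  rw [← mul_shc u]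
  field_simp

lemma hasDerivAt_mul_sq (z x : ℝ) : HasDerivAt (fun t => z * t ^ 2) (2 * z * x) x :=
  ((hasDerivAt_pow 2 x).const_mul z).congr_deriv (by ring)

lemma hasDerivAt_cosh_mul_sq (z x : ℝ) :
    HasDerivAt (fun t => cosh (z * t ^ 2)) (2 * z ^ 2 * x ^ 3 * shc (z * x ^ 2)) x :=
  ((hasDerivAt_cosh _).comp x (hasDerivAt_mul_sq z x)).congr_deriv
    (by rw [← mul_shc]; ring)

lemma hasDerivAt_shc_mul_sq (z : ℝ) {x : ℝ} (hx : x ≠ 0) :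
    HasDerivAt (fun t => shc (z * t ^ 2)) (2 * (cosh (z * x ^ 2) - shc (z * x ^ 2)) / x) x := by
  rcases eq_or_ne z 0 with rfl | hz
  · simpa [shc] using hasDerivAt_const x (1 : ℝ)
  · have hu : z * x ^ 2 ≠ 0 := by positivity
    refine ((hasDerivAt_shc hu).comp x (hasDerivAt_mul_sq z x)).congr_deriv ?_
    field_simp

def HasPartialDerivsAt (f : ℝ → ℝ → ℝ) (fx fy x y : ℝ) : Prop :=
  HasDerivAt (fun t => f t y) fx x ∧ HasDerivAt (fun t => f x t) fy y

lemma lieBracket_eq_of_hasPartialDerivsAt {f g p q : ℝ → ℝ → ℝ}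
    {fx fy gx gy px py qx qy x y : ℝ}
    (hf : HasPartialDerivsAt f fx fy x y) (hg : HasPartialDerivsAt g gx gy x y)
    (hp : HasPartialDerivsAt p px py x y) (hq : HasPartialDerivsAt q qx qy x y) :
    lieBracket f g p q x y =
      (f x y * px + g x y * py - (p x y * fx + q x y * fy),
       f x y * qx + g x y * qy - (p x y * gx + q x y * gy)) := by
  simp only [lieBracket, pdx, pdy, hf.1.deriv, hf.2.deriv, hg.1.deriv, hg.2.deriv,
    hp.1.deriv, hp.2.deriv, hq.1.deriv, hq.2.deriv]

lemma hasPartialDerivsAt_const (a x y : ℝ) : HasPartialDerivsAt (fun _ _ => a) 0 0 x y :=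
  ⟨hasDerivAt_const x a, hasDerivAt_const y a⟩

lemma hasPartialDerivsAt_neg_fst (x y : ℝ) : HasPartialDerivsAt (fun x _ => -x) (-1) 0 x y :=
  ⟨hasDerivAt_neg x, hasDerivAt_const y (-x)⟩

section Fields

variable (z c : ℝ) {x : ℝ} (y : ℝ)

lemma hasPartialDerivsAt_X₂_fst (hx : x ≠ 0) :
    HasPartialDerivsAt (fun x _ => -(1 / 2) * shc (z * x ^ 2) * x)
      (shc (z * x ^ 2) / 2 - cosh (z * x ^ 2)) 0 x y := by
  refine ⟨?_, hasDerivAt_const y _⟩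
  refine (((hasDerivAt_shc_mul_sq z hx).const_mul _).mul (hasDerivAt_id' x)).congr_deriv ?_
  field_simp
  ring

lemma hasPartialDerivsAt_X₂_snd (hx : x ≠ 0) :
    HasPartialDerivsAt (fun x y => (cosh (z * x ^ 2) - shc (z * x ^ 2) / 2) * y)
      ((2 * z ^ 2 * x ^ 3 * shc (z * x ^ 2) - (cosh (z * x ^ 2) - shc (z * x ^ 2)) / x) * y)
      (cosh (z * x ^ 2) - shc (z * x ^ 2) / 2) x y := by
  refine ⟨?_, (hasDerivAt_id' y).const_mul _ |>.congr_deriv (mul_one _)⟩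
  refine ((hasDerivAt_cosh_mul_sq z x).sub ((hasDerivAt_shc_mul_sq z hx).div_const 2)
    |>.mul_const y).congr_deriv ?_
  ring

lemma hasPartialDerivsAt_X₃_fst (hx : x ≠ 0) :
    HasPartialDerivsAt (fun x y => shc (z * x ^ 2) * y)
      (2 * (cosh (z * x ^ 2) - shc (z * x ^ 2)) / x * y) (shc (z * x ^ 2)) x y :=
  ⟨(hasDerivAt_shc_mul_sq z hx).mul_const y,
    (hasDerivAt_id' y).const_mul _ |>.congr_deriv (mul_one _)⟩

lemma hasPartialDerivsAt_X₃_snd (hx : x ≠ 0) :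
    HasPartialDerivsAt
      (fun x y => (c / x ^ 3) * cosh (z * x ^ 2) / (shc (z * x ^ 2)) ^ 2 +
        (shc (z * x ^ 2) - cosh (z * x ^ 2)) * y ^ 2 / x)
      (c * (2 * z ^ 2 / shc (z * x ^ 2) + cosh (z * x ^ 2) / (x ^ 4 * shc (z * x ^ 2) ^ 2)
          - 4 * cosh (z * x ^ 2) ^ 2 / (x ^ 4 * shc (z * x ^ 2) ^ 3)) +
        y ^ 2 * (3 * (cosh (z * x ^ 2) - shc (z * x ^ 2)) / x ^ 2
          - 2 * z ^ 2 * x ^ 2 * shc (z * x ^ 2)))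
      (2 * (shc (z * x ^ 2) - cosh (z * x ^ 2)) * y / x) x y := by
  have hs : shc (z * x ^ 2) ≠ 0 := (shc_pos _).ne'
  have hS := hasDerivAt_shc_mul_sq z hx
  have hC := hasDerivAt_cosh_mul_sq z x
  constructor
  · refine ((((hasDerivAt_pow 3 x).fun_inv (pow_ne_zero 3 hx)).const_mul c |>.fun_mul hC
      |>.fun_div (hS.fun_pow 2) (pow_ne_zero 2 hs)).fun_add
      (((hS.fun_sub hC).mul_const (y ^ 2)).fun_div (hasDerivAt_id' x) hx)).congr_deriv ?_
    norm_num
    field_simp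
    ring
  · refine (((hasDerivAt_pow 2 y).const_mul _).div_const x |>.const_add _).congr_deriv ?_
    ring

end Fields

theorem deformed_mp_vf_brackets (z c : ℝ)
    (f₁ g₁ f₂ g₂ f₃ g₃ : ℝ → ℝ → ℝ)
    (H1 : ∀ x y : ℝ, f₁ x y = 0 ∧ g₁ x y = -x)
    (H2 : ∀ x y : ℝ,
      f₂ x y = -(1 / 2) * shc (z * x ^ 2) * x ∧
      g₂ x y = (Real.cosh (z * x ^ 2) - shc (z * x ^ 2) / 2) * y)
    (H3 : ∀ x y : ℝ,
      f₃ x y = shc (z * x ^ 2) * y ∧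
      g₃ x y = (c / x ^ 3) * Real.cosh (z * x ^ 2) / (shc (z * x ^ 2)) ^ 2 +
        (shc (z * x ^ 2) - Real.cosh (z * x ^ 2)) * y ^ 2 / x) :
    ∀ x y : ℝ, x ≠ 0 →
      lieBracket f₁ g₁ f₂ g₂ x y =
        (Real.cosh (z * x ^ 2) * f₁ x y, Real.cosh (z * x ^ 2) * g₁ x y) ∧
      lieBracket f₁ g₁ f₃ g₃ x y = (2 * f₂ x y, 2 * g₂ x y) ∧
      lieBracket f₂ g₂ f₃ g₃ x y =
        (Real.cosh (z * x ^ 2) * f₃ x y +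
            z ^ 2 * (c + x ^ 2 * y ^ 2 * (shc (z * x ^ 2)) ^ 2) * f₁ x y,
         Real.cosh (z * x ^ 2) * g₃ x y +
            z ^ 2 * (c + x ^ 2 * y ^ 2 * (shc (z * x ^ 2)) ^ 2) * g₁ x y) := by
  intro x y hx
  obtain rfl : f₁ = fun _ _ => 0 := funext₂ fun x y => (H1 x y).1
  obtain rfl : g₁ = fun x _ => -x := funext₂ fun x y => (H1 x y).2
  obtain rfl : f₂ = fun x _ => -(1 / 2) * shc (z * x ^ 2) * x := funext₂ fun x y => (H2 x y).1
  obtain rfl : g₂ = fun x y => (Real.cosh (z * x ^ 2) - shc (z * x ^ 2) / 2) * y :=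
    funext₂ fun x y => (H2 x y).2
  obtain rfl : f₃ = fun x y => shc (z * x ^ 2) * y := funext₂ fun x y => (H3 x y).1
  obtain rfl : g₃ = fun x y => (c / x ^ 3) * Real.cosh (z * x ^ 2) / (shc (z * x ^ 2)) ^ 2 +
      (shc (z * x ^ 2) - Real.cosh (z * x ^ 2)) * y ^ 2 / x :=
    funext₂ fun x y => (H3 x y).2
  have h₁f := hasPartialDerivsAt_const 0 x y
  have h₁g := hasPartialDerivsAt_neg_fst x y
  have h₂f := hasPartialDerivsAt_X₂_fst z y hx
  have h₂g := hasPartialDerivsAt_X₂_snd z y hx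
  have h₃f := hasPartialDerivsAt_X₃_fst z y hx
  have h₃g := hasPartialDerivsAt_X₃_snd z c y hx
  have hs : shc (z * x ^ 2) ≠ 0 := (shc_pos _).ne'
  rw [lieBracket_eq_of_hasPartialDerivsAt h₁f h₁g h₂f h₂g,
    lieBracket_eq_of_hasPartialDerivsAt h₁f h₁g h₃f h₃g,
    lieBracket_eq_of_hasPartialDerivsAt h₂f h₂g h₃f h₃g]
  refine ⟨Prod.ext ?_ ?_, Prod.ext ?_ ?_, Prod.ext ?_ ?_⟩ <;> dsimp only <;> field_simp <;> ring
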